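/- arXiv:math/0611024 — 3 statements merged into one kernel-verified Lean document; each statement's English description precedes it below -/
import Mathlib

section
/- Let μ ⊆ λ be a nonzero composition with ℓ(μ) = d_{|μ|} =: d, and let 1 ≤ i_1 < ⋯ < i_d ≤ n index the nonzero parts of μ. Then for every permutation w ∈ S_d and every j = 1,…,d, one has μ_{i_j} > λ_{i_j} − min(λ_{i_{wj}}, λ_{i_j}). -/
noncomputable section

open scoped BigOperators

attribute [local instance] LieRing.ofAssociativeRing

/-- The matrix of the nilpotent `e` determined by the filling `row, col` of the diagram:
`e = Σ e_{h,k}` over pairs of boxes in the same row with `col k = col h + 1`. -/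
def eNil (F : Type*) [Field F] {n N : ℕ} (row : Fin N → Fin n) (col : Fin N → ℕ) :
    Matrix (Fin N) (Fin N) F :=
  ∑ h : Fin N, ∑ k : Fin N,
    if row h = row k ∧ col k = col h + 1 then Matrix.single h k (1 : F) else 0

/-- The shift `s_{i,j} = λ_j - min(λ_i, λ_j)`. -/
def sft {n : ℕ} (lam : Fin n → ℕ) (i j : Fin n) : ℕ := lam j - min (lam i) (lam j)

/-- The element `e_{i,j;r}` of the centralizer, as a matrix:
`Σ e_{h,k}` over boxes `h` in row `i` and `k` in row `j` with `col k - col h = r`. -/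
def eE (F : Type*) [Field F] {n N : ℕ} (row : Fin N → Fin n) (col : Fin N → ℕ)
    (i j : Fin n) (r : ℕ) : Matrix (Fin N) (Fin N) F :=
  ∑ h : Fin N, ∑ k : Fin N,
    if row h = i ∧ row k = j ∧ col k = col h + r then Matrix.single h k (1 : F) else 0

/-- The centralizer `g_e` of `e` in `gl_N(F)`, as a Lie subalgebra. -/
def gCent (F : Type*) [Field F] {N : ℕ} (e : Matrix (Fin N) (Fin N) F) :
    LieSubalgebra F (Matrix (Fin N) (Fin N) F) where
  carrier := {x | x * e = e * x}
  add_mem' := by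
    intro x y hx hy
    simp only [Set.mem_setOf_eq] at *
    rw [add_mul, mul_add, hx, hy]
  zero_mem' := by simp
  smul_mem' := by
    intro c x hx
    simp only [Set.mem_setOf_eq] at *
    rw [Matrix.smul_mul, Matrix.mul_smul, hx]
  lie_mem' := by
    intro x y hx hy
    simp only [Set.mem_setOf_eq, Ring.lie_def] at *
    rw [sub_mul, mul_sub, mul_assoc, hy, ← mul_assoc, hx, mul_assoc, mul_assoc, hx,
      ← mul_assoc, ← mul_assoc, hy, mul_assoc, mul_assoc]

/-- The sum of the `t` largest parts of `λ` (recall `λ_1 ≤ ⋯ ≤ λ_n`, zero-indexed). -/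
def topSum {n : ℕ} (lam : Fin n → ℕ) (t : ℕ) : ℕ :=
  ∑ i ∈ Finset.univ.filter (fun i : Fin n => n - t ≤ (i : ℕ)), lam i

/-- The invariant degree `d_r`: the least `d` with `λ_n + ⋯ + λ_{n-d+1} ≥ r`. -/
def invDeg {n : ℕ} (lam : Fin n → ℕ) (r : ℕ) : ℕ :=
  sInf {d : ℕ | r ≤ topSum lam d}

/-- The index set for the basis `{e_{i,j;r}}` of `g_e`: triples `(i,j,r)` with
`s_{i,j} ≤ r < λ_j`. -/
def BoxIdx {n : ℕ} (lam : Fin n → ℕ) : Type :=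
  {t : Fin n × Fin n × ℕ // sft lam t.1 t.2.1 ≤ t.2.2 ∧ t.2.2 < lam t.2.1}

/-- The column determinant of a matrix with (possibly noncommutative) ring entries:
`cdet A = Σ_w sgn(w) a_{w1,1} ⋯ a_{wn,n}`. -/
def cdet {R : Type*} [Ring R] {m : ℕ} (A : Matrix (Fin m) (Fin m) R) : R :=
  ∑ w : Equiv.Perm (Fin m), ((Equiv.Perm.sign w : ℤˣ) : ℤ) • (List.ofFn fun q => A (w q) q).prod

section UEA

variable (F : Type*) [Field F] {n N : ℕ} (lam : Fin n → ℕ)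
  (row : Fin N → Fin n) (col : Fin N → ℕ)
  (eB : Fin n → Fin n → ℕ → ↥(gCent F (eNil F row col)))

/-- `ẽ_{i,j;r} = e_{i,j;r} - δ_{r,0} δ_{i,j} (i-1) λ_i` inside `U(g_e)`
(zero-indexed: the scalar is `i·λ_i` for `i : Fin n`). -/
def eTilde (i j : Fin n) (r : ℕ) :
    UniversalEnvelopingAlgebra F ↥(gCent F (eNil F row col)) :=
  UniversalEnvelopingAlgebra.ι F (eB i j r) -
    (if r = 0 ∧ i = j then (((i : ℕ) * lam i : ℕ) : F) • 1 else 0)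

/-- The column determinant `cdet(μ)` in `U(g_e)` attached to `μ ⊆ λ`. -/
def cdetMu (μ : Fin n → Fin (N + 1)) :
    UniversalEnvelopingAlgebra F ↥(gCent F (eNil F row col)) :=
  ∑ w : Equiv.Perm (Fin (Finset.univ.filter (fun i : Fin n => (μ i : ℕ) ≠ 0)).card),
    ((Equiv.Perm.sign w : ℤˣ) : ℤ) •
      (List.ofFn fun j =>
        eTilde F lam row col eB
          (((Finset.univ.filter (fun i : Fin n => (μ i : ℕ) ≠ 0)).orderIsoOfFin rfl (w j)) : Fin n)
          (((Finset.univ.filter (fun i : Fin n => (μ i : ℕ) ≠ 0)).orderIsoOfFin rfl j) : Fin n)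
          ((μ (((Finset.univ.filter (fun i : Fin n => (μ i : ℕ) ≠ 0)).orderIsoOfFin rfl j) : Fin n) : ℕ) - 1)).prod

/-- The element `z_r = Σ_{μ ⊆ λ, |μ| = r, ℓ(μ) = d_r} cdet(μ)` of `U(g_e)`. -/
def zEl (r : ℕ) : UniversalEnvelopingAlgebra F ↥(gCent F (eNil F row col)) :=
  ∑ μ ∈ Finset.univ.filter (fun μ : Fin n → Fin (N + 1) =>
      (∀ i, (μ i : ℕ) ≤ lam i) ∧ (∑ i, (μ i : ℕ)) = r ∧
        (Finset.univ.filter (fun i : Fin n => (μ i : ℕ) ≠ 0)).card = invDeg lam r),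
    cdetMu F lam row col eB μ

end UEA

section Sym

variable (F : Type*) [Field F] {n : ℕ} (lam : Fin n → ℕ)

/-- The generator `e_{i,j;r}` of the symmetric algebra `S(g_e)`, modelled as the variable
`X (i,j,r)` of a polynomial ring (and `0` for indices out of range, which never occur). -/
def xE (i j : Fin n) (r : ℕ) : MvPolynomial (BoxIdx lam) F :=
  if h : sft lam i j ≤ r ∧ r < lam j then MvPolynomial.X ⟨(i, j, r), h⟩ else 0

/-- The summand of `x_r` attached to `μ ⊆ λ`:
`Σ_w sgn(w) e_{i_{w1},i_1;μ_{i_1}-1} ⋯ e_{i_{wd},i_d;μ_{i_d}-1}` in `S(g_e)`. -/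
def xcdetMu (N : ℕ) (μ : Fin n → Fin (N + 1)) : MvPolynomial (BoxIdx lam) F :=
  ∑ w : Equiv.Perm (Fin (Finset.univ.filter (fun i : Fin n => (μ i : ℕ) ≠ 0)).card),
    ((Equiv.Perm.sign w : ℤˣ) : ℤ) •
      ∏ j, xE F lam
          (((Finset.univ.filter (fun i : Fin n => (μ i : ℕ) ≠ 0)).orderIsoOfFin rfl (w j)) : Fin n)
          (((Finset.univ.filter (fun i : Fin n => (μ i : ℕ) ≠ 0)).orderIsoOfFin rfl j) : Fin n)
          ((μ (((Finset.univ.filter (fun i : Fin n => (μ i : ℕ) ≠ 0)).orderIsoOfFin rfl j) : Fin n) : ℕ) - 1)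

/-- The invariant `x_r ∈ S(g_e)`. -/
def xEl (N : ℕ) (r : ℕ) : MvPolynomial (BoxIdx lam) F :=
  ∑ μ ∈ Finset.univ.filter (fun μ : Fin n → Fin (N + 1) =>
      (∀ i, (μ i : ℕ) ≤ lam i) ∧ (∑ i, (μ i : ℕ)) = r ∧
        (Finset.univ.filter (fun i : Fin n => (μ i : ℕ) ≠ 0)).card = invDeg lam r),
    xcdetMu F lam N μ

end Sym

section Dual

variable (F : Type*) [Field F] {n N : ℕ} (lam : Fin n → ℕ)
  (row : Fin N → Fin n) (col : Fin N → ℕ)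
  (bE : Module.Basis (BoxIdx lam) F ↥(gCent F (eNil F row col)))

/-- The coadjoint action `(ad* x)(ξ) = -ξ ∘ (ad x)` of `g_e` on `g_e^*`. -/
def coad (x : ↥(gCent F (eNil F row col)))
    (ξ : Module.Dual F ↥(gCent F (eNil F row col))) :
    Module.Dual F ↥(gCent F (eNil F row col)) :=
  -(ξ ∘ₗ (LieAlgebra.ad F ↥(gCent F (eNil F row col)) x : _ →ₗ[F] _))

/-- The dual basis vector `f_{i,j;t}` of `g_e^*`, with the convention that it is `0`
for `t` outside the range `s_{i,j} ≤ t < λ_j`. -/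
def fHat (i j : Fin n) (t : ℤ) : Module.Dual F ↥(gCent F (eNil F row col)) :=
  if h : (sft lam i j : ℤ) ≤ t ∧ t < (lam j : ℤ) then
    bE.coord ⟨(i, j, t.toNat), ⟨show sft lam i j ≤ t.toNat by omega, show t.toNat < lam j by omega⟩⟩ else 0

/-- The basis vector `e_{i,j;r}` of `g_e`, with the convention that it is `0` for `r`
outside the range `s_{i,j} ≤ r < λ_j`. -/
def eHat (i j : Fin n) (r : ℕ) : ↥(gCent F (eNil F row col)) :=
  if h : sft lam i j ≤ r ∧ r < lam j then bE ⟨(i, j, r), h⟩ else 0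

/-- The functional `f = f_{1,2;λ_2-1} + f_{2,3;λ_3-1} + ⋯ + f_{n-1,n;λ_n-1} ∈ g_e^*`,
described by its values on the basis `{e_{i,j;r}}`. -/
def fReg : Module.Dual F ↥(gCent F (eNil F row col)) :=
  bE.constr F fun b : BoxIdx lam =>
    if (b.1.2.1 : ℕ) = (b.1.1 : ℕ) + 1 ∧ b.1.2.2 = lam b.1.2.1 - 1 then (1 : F) else 0

/-- The point `f + Σ_{j,t} a_{j,t} f_{n,j;t}` of the slice `S = f + V`, described by its
values on the basis `{e_{i,j;r}}`; here `a j t` is the coordinate `a_{j+1,t}` (rows of the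
diagram being zero-indexed). -/
def slicePt (a : ℕ → ℕ → F) : Module.Dual F ↥(gCent F (eNil F row col)) :=
  bE.constr F fun b : BoxIdx lam =>
    (if (b.1.2.1 : ℕ) = (b.1.1 : ℕ) + 1 ∧ b.1.2.2 = lam b.1.2.1 - 1 then (1 : F) else 0) +
      (if (b.1.1 : ℕ) = n - 1 then a (b.1.2.1 : ℕ) b.1.2.2 else 0)

/-- The subspace `V ⊆ g_e^*` spanned by the `f_{n,j;t}`, `0 ≤ t < λ_j`. -/
def sliceV : Submodule F (Module.Dual F ↥(gCent F (eNil F row col))) :=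
  Submodule.span F {φ | ∃ b : BoxIdx lam, (b.1.1 : ℕ) = n - 1 ∧ φ = bE.coord b}

/-- Restriction of polynomial functions on `g_e^*` to the slice `S = f + V`, as an
algebra homomorphism onto the coordinate ring of `S ≅ 𝔸^N` (with coordinates `a_{j,t}`,
`0 ≤ t < λ_j`, indexed by `Σ_j Fin (λ_j)`). -/
def restrictS : MvPolynomial (BoxIdx lam) F →ₐ[F] MvPolynomial ((j : Fin n) × Fin (lam j)) F :=
  MvPolynomial.aeval fun b : BoxIdx lam =>
    MvPolynomial.C
        (if (b.1.2.1 : ℕ) = (b.1.1 : ℕ) + 1 ∧ b.1.2.2 = lam b.1.2.1 - 1 then (1 : F) else 0) +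
      (if (b.1.1 : ℕ) = n - 1 then MvPolynomial.X ⟨b.1.2.1, ⟨b.1.2.2, b.2.2⟩⟩ else 0)

end Dual

/-! The sum over any `k` parts of `λ` is at most `topSum lam k`; the condition `ℓ(μ) = d_{|μ|}`
says that the `ℓ(μ) - 1` largest parts of `λ` do not suffice to reach `|μ|`. Hence dropping one part
`a` of `μ`, the remaining parts fall short of `λ` by less than `λ_a` in total, and in particular
`λ_b - μ_b < λ_a` for any two nonzero parts `a ≠ b`. -/

lemma topSum_succ {n : ℕ} (lam : Fin n → ℕ) {t : ℕ} (ht : t < n) :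
    topSum lam (t + 1) = lam ⟨n - t - 1, by omega⟩ + topSum lam t := by
  have hset : Finset.univ.filter (fun i : Fin n => n - (t + 1) ≤ (i : ℕ)) =
      insert ⟨n - t - 1, by omega⟩ (Finset.univ.filter fun i : Fin n => n - t ≤ (i : ℕ)) := by
    ext i
    simp only [Finset.mem_filter, Finset.mem_univ, true_and, Finset.mem_insert, Fin.ext_iff]
    omega
  rw [topSum, topSum, hset, Finset.sum_insert (by simp; omega)]

lemma Monotone.sum_le_topSum {n : ℕ} {lam : Fin n → ℕ} (hmono : Monotone lam)
    (A : Finset (Fin n)) : ∑ i ∈ A, lam i ≤ topSum lam A.card := by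
  induction A using Finset.induction_on_min with
  | empty => simp
  | insert a A ha_lt ih =>
    have ha : a ∉ A := fun h => lt_irrefl a (ha_lt a h)
    have hcard : A.card ≤ n - 1 - a := by
      simpa [Fin.card_Ioi] using Finset.card_le_card fun x hx => Finset.mem_Ioi.mpr (ha_lt x hx)
    rw [Finset.sum_insert ha, Finset.card_insert_of_notMem ha, topSum_succ lam (by omega)]
    exact add_le_add (hmono (show a ≤ ⟨n - A.card - 1, _⟩ from Fin.le_def.mpr (by simp; omega))) ih

lemma topSum_lt_of_lt_invDeg {n : ℕ} (lam : Fin n → ℕ) {r d : ℕ} (hd : d < invDeg lam r) :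
    topSum lam d < r :=
  not_le.mp (Nat.notMem_of_lt_sInf (s := {d | r ≤ topSum lam d}) hd)

lemma sum_erase_tsub_lt_of_card_eq_invDeg {n : ℕ} {lam : Fin n → ℕ} (hmono : Monotone lam)
    {μ : Fin n → ℕ} (hsub : ∀ i, μ i ≤ lam i)
    (hd : (Finset.univ.filter fun i => μ i ≠ 0).card = invDeg lam (∑ i, μ i))
    {a : Fin n} (ha : a ∈ Finset.univ.filter fun i => μ i ≠ 0) :
    ∑ i ∈ (Finset.univ.filter fun i => μ i ≠ 0).erase a, (lam i - μ i) < lam a := by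
  set s := Finset.univ.filter fun i => μ i ≠ 0
  have hshort : ∑ i ∈ s.erase a, lam i < ∑ i, μ i := by
    calc ∑ i ∈ s.erase a, lam i ≤ topSum lam (s.erase a).card := hmono.sum_le_topSum _
      _ < ∑ i, μ i := by
        apply topSum_lt_of_lt_invDeg
        rw [Finset.card_erase_of_mem ha, ← hd]
        exact Nat.sub_lt (Finset.card_pos.mpr ⟨a, ha⟩) one_pos
  have hsplit : ∑ i, μ i = μ a + ∑ i ∈ s.erase a, μ i := by
    rw [Finset.add_sum_erase s μ ha, Finset.sum_filter_ne_zero]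
  have hμ_le : ∑ i ∈ s.erase a, μ i ≤ ∑ i ∈ s.erase a, lam i :=
    Finset.sum_le_sum fun i _ => hsub i
  rw [Finset.sum_tsub_distrib _ fun i _ => hsub i]
  have := hsub a
  omega

lemma sft_lt_of_card_eq_invDeg {n : ℕ} {lam : Fin n → ℕ} (hmono : Monotone lam)
    {μ : Fin n → ℕ} (hsub : ∀ i, μ i ≤ lam i)
    (hd : (Finset.univ.filter fun i => μ i ≠ 0).card = invDeg lam (∑ i, μ i))
    {a b : Fin n} (ha : a ∈ Finset.univ.filter fun i => μ i ≠ 0)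
    (hb : b ∈ Finset.univ.filter fun i => μ i ≠ 0) :
    sft lam a b < μ b := by
  have hμb : 0 < μ b := Nat.pos_of_ne_zero (Finset.mem_filter.mp hb).2
  rcases eq_or_ne b a with rfl | hba
  · simpa [sft] using hμb
  have hdeficit : lam b - μ b < lam a :=
    lt_of_le_of_lt (Finset.single_le_sum (f := fun i => lam i - μ i) (fun _ _ => Nat.zero_le _)
      (Finset.mem_erase.mpr ⟨hba, hb⟩)) (sum_erase_tsub_lt_of_card_eq_invDeg hmono hsub hd ha)
  unfold sft
  omega

theorem statement8_general {n : ℕ} (lam : Fin n → ℕ)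
    (hmono : Monotone lam)
    (μ : Fin n → ℕ) (hsub : ∀ i, μ i ≤ lam i)
    (hd : (Finset.univ.filter fun i => μ i ≠ 0).card = invDeg lam (∑ i, μ i)) :
    ∀ (w : Equiv.Perm (Fin (Finset.univ.filter fun i => μ i ≠ 0).card))
      (j : Fin (Finset.univ.filter fun i => μ i ≠ 0).card),
      lam (((Finset.univ.filter fun i => μ i ≠ 0).orderIsoOfFin rfl j : Fin n)) -
        min (lam (((Finset.univ.filter fun i => μ i ≠ 0).orderIsoOfFin rfl (w j) : Fin n)))
          (lam (((Finset.univ.filter fun i => μ i ≠ 0).orderIsoOfFin rfl j : Fin n))) <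
        μ (((Finset.univ.filter fun i => μ i ≠ 0).orderIsoOfFin rfl j : Fin n)) :=
  fun _ _ => sft_lt_of_card_eq_invDeg hmono hsub hd (Subtype.prop _) (Subtype.prop _)

theorem statement8 {n N : ℕ} (lam : Fin n → ℕ)
    (hpos : ∀ i, 0 < lam i) (hmono : Monotone lam) (hsum : ∑ i, lam i = N)
    (μ : Fin n → ℕ) (hsub : ∀ i, μ i ≤ lam i) (hne : μ ≠ 0)
    (hd : (Finset.univ.filter fun i => μ i ≠ 0).card = invDeg lam (∑ i, μ i)) :
    ∀ (w : Equiv.Perm (Fin (Finset.univ.filter fun i => μ i ≠ 0).card))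
      (j : Fin (Finset.univ.filter fun i => μ i ≠ 0).card),
      lam (((Finset.univ.filter fun i => μ i ≠ 0).orderIsoOfFin rfl j : Fin n)) -
        min (lam (((Finset.univ.filter fun i => μ i ≠ 0).orderIsoOfFin rfl (w j) : Fin n)))
          (lam (((Finset.univ.filter fun i => μ i ≠ 0).orderIsoOfFin rfl j : Fin n))) <
        μ (((Finset.univ.filter fun i => μ i ≠ 0).orderIsoOfFin rfl j : Fin n)) :=
  statement8_general lam hmono μ hsub hd
end
end

section
/- Fix 1 ≤ r ≤ N, let d := d_r and s := r − (λ_n + λ_{n−1} + ⋯ + λ_{n−d+2}). Then for every point v = f + Σ_{j=1}^n Σ_{t=0}^{λ_j−1} a_{j,t} f_{n,j;t} of the affine subspace S (with coefficients a_{j,t} ∈ F), the value of the polynomial function x_r at v equals (−1)^{d−1} a_{n−d+1, s−1}. -/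
noncomputable section

open scoped BigOperators

attribute [local instance 100] LieRing.ofAssociativeRing

/-!
At a point of the slice, `e_{i,j;t}` can only take a nonzero value if `i = n` (the coordinates
`a_{j,t}`) or if `e_{i,j;t} = e_{i,i+1;λ_{i+1}-1}` (the entries of `f`). In the column determinant
attached to `μ`, a nonzero term therefore has to follow a cyclic shift through the rows of `μ`,
and this forces `μ` to be `(0,…,0,s,λ_{n-d+2},…,λ_n)`. The matrix of that single surviving `μ` has
ones on its superdiagonal, the coordinates `a` in its last row and zeros elsewhere, so expanding
its determinant along the first column gives `(-1)^{d-1} a_{n-d+1,s-1}`.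
-/

open Finset

theorem Matrix.exists_perm_forall_ne_zero_of_det_ne_zero {R ι : Type*} [CommRing R] [Fintype ι]
    [DecidableEq ι] {M : Matrix ι ι R} (h : M.det ≠ 0) :
    ∃ σ : Equiv.Perm ι, ∀ i, M (σ i) i ≠ 0 := by
  rw [Matrix.det_apply] at h
  obtain ⟨σ, -, hσ⟩ := Finset.exists_ne_zero_of_sum_ne_zero h
  refine ⟨σ, fun i hi => hσ ?_⟩
  rw [Finset.prod_eq_zero (f := fun j => M (σ j) j) (mem_univ i) hi, smul_zero]

theorem Matrix.det_eq_of_superdiagonal_ones {R : Type*} [CommRing R] {c : ℕ} (hc : 0 < c)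
    (M : Matrix (Fin c) (Fin c) R)
    (hcol : ∀ p : Fin c, (p : ℕ) ≠ c - 1 → M p ⟨0, hc⟩ = 0)
    (hrest : ∀ p q : Fin c, (p : ℕ) ≠ c - 1 → (q : ℕ) ≠ 0 →
      M p q = if (p : ℕ) + 1 = q then 1 else 0) :
    M.det = (-1) ^ (c - 1) * M ⟨c - 1, by omega⟩ ⟨0, hc⟩ := by
  obtain ⟨k, rfl⟩ : ∃ k, c = k + 1 := ⟨c - 1, by omega⟩
  have hminor : M.submatrix (Fin.last k).succAbove Fin.succ = 1 := by
    ext p q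
    rw [Fin.succAbove_last, Matrix.submatrix_apply, hrest _ _ (by rw [Fin.coe_castSucc]; omega) (by simp),
      Matrix.one_apply]
    simp [Fin.ext_iff]
  rw [Matrix.det_succ_column_zero, Finset.sum_eq_single (Fin.last k), hminor, Matrix.det_one]
  · simp only [Fin.val_last, mul_one]; rfl
  · intro p _ hp
    rw [show (0 : Fin (k + 1)) = ⟨0, hc⟩ from rfl, hcol p (by simpa [Fin.ext_iff] using hp)]
    simp
  · simp

theorem Fin.card_filter_le_val {n k : ℕ} : #{i : Fin n | k ≤ (i : ℕ)} = n - k := by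
  have := Finset.card_filter_add_card_filter_not (s := (univ : Finset (Fin n)))
    (fun i : Fin n => (i : ℕ) < k)
  simp only [not_lt, card_univ, Fintype.card_fin, Fin.card_filter_val_lt] at this
  omega

theorem Fin.card_of_forall_mem_iff_le_val {n k : ℕ} {S : Finset (Fin n)}
    (hS : ∀ i, i ∈ S ↔ k ≤ (i : ℕ)) : S.card = n - k := by
  rw [show S = univ.filter fun i : Fin n => k ≤ (i : ℕ) by ext i; simp only [mem_filter,
    mem_univ, true_and, hS], Fin.card_filter_le_val]

theorem Finset.val_orderEmbOfFin_of_mem_iff {n k c : ℕ} {S : Finset (Fin n)}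
    (hS : ∀ i, i ∈ S ↔ k ≤ (i : ℕ)) (h : S.card = c) (q : Fin c) :
    (S.orderEmbOfFin h q : ℕ) = k + q := by
  have hc : c = n - k := h ▸ Fin.card_of_forall_mem_iff_le_val hS
  have hq := q.isLt
  have := S.orderEmbOfFin_unique h (f := fun q : Fin c => (⟨k + q, by omega⟩ : Fin n))
    (fun q => (hS _).mpr (Nat.le_add_right _ _))
    (fun x y hxy => Fin.mk_lt_mk.mpr (Nat.add_lt_add_left hxy k))
  rw [← congrFun this q]

/- `q = 0` cannot step down since `ι` is monotone, so it is the index that `w` sends to the last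
row; every other `q` then steps down by exactly one, which squeezes `ι` onto an interval. -/
theorem OrderEmbedding.val_eq_of_cyclic_shift {d n : ℕ} (ι : Fin d ↪o Fin n)
    (w : Equiv.Perm (Fin d)) (P : Fin d → Prop)
    (h : ∀ q, (ι (w q) : ℕ) = n - 1 ∨ ((ι q : ℕ) = ι (w q) + 1 ∧ P q)) :
    (∀ q, (ι q : ℕ) = n - d + q) ∧ ∀ q : Fin d, (q : ℕ) ≠ 0 → P q := by
  rcases d with _ | k
  · exact ⟨fun q => q.elim0, fun q => q.elim0⟩
  have hw0 : (ι (w 0) : ℕ) = n - 1 := by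
    have : ι 0 ≤ ι (w 0) := ι.monotone (Fin.zero_le _)
    rw [Fin.le_def] at this
    exact (h 0).resolve_right (by omega)
  have hstep : ∀ q, q ≠ 0 → (ι q : ℕ) = ι (w q) + 1 ∧ P q := fun q hq =>
    (h q).resolve_left fun hq' => hq (w.injective (ι.injective (Fin.ext (hq'.trans hw0.symm))))
  have hsucc : ∀ q : Fin k, (ι q.succ : ℕ) = ι q.castSucc + 1 := by
    intro q
    have hq := (hstep q.succ (Fin.succ_ne_zero q)).1
    have hlt : w q.succ < q.succ := ι.lt_iff_lt.mp (Fin.lt_def.mpr (by omega))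
    have hle : ι (w q.succ) ≤ ι q.castSucc :=
      ι.monotone (Fin.le_castSucc_iff.mpr hlt)
    have hcs : ι q.castSucc < ι q.succ := ι.strictMono Fin.castSucc_lt_succ
    rw [Fin.le_def] at hle
    rw [Fin.lt_def] at hcs
    omega
  have hval : ∀ q, (ι q : ℕ) = ι 0 + q := by
    intro q
    induction q using Fin.induction with
    | zero => simp
    | succ q ih => rw [hsucc, ih]; simp; omega
  have hlast := (ι (Fin.last k)).isLt
  have hw0le := Fin.le_last (w 0)
  rw [hval, Fin.val_last] at hlast
  rw [hval] at hw0
  rw [Fin.le_def, Fin.val_last] at hw0le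
  refine ⟨fun q => by rw [hval q]; omega, fun q hq => (hstep q (fun h0 => hq (by simp [h0]))).2⟩

section Partition

variable {n : ℕ} (lam : Fin n → ℕ)

theorem topSum_zero : topSum lam 0 = 0 :=
  Finset.sum_eq_zero fun i hi => absurd (mem_filter.mp hi).2 (by omega)

theorem topSum_self : topSum lam n = ∑ i, lam i := by
  simp [topSum]

theorem topSum_eq_add_topSum_pred {d : ℕ} (hd1 : 1 ≤ d) (hdn : d ≤ n) :
    topSum lam d = lam ⟨n - d, by omega⟩ + topSum lam (d - 1) := by
  have hsplit : ∀ i : Fin n, (if n - d ≤ (i : ℕ) then lam i else 0) =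
      (if i = ⟨n - d, by omega⟩ then lam i else 0) +
        if n - (d - 1) ≤ (i : ℕ) then lam i else 0 := by
    intro i
    simp only [Fin.ext_iff]
    split_ifs <;> omega
  simp only [topSum, sum_filter, hsplit, sum_add_distrib, sum_ite_eq', mem_univ, if_true]

variable {lam}

theorem le_topSum_invDeg {r : ℕ} (hr : r ≤ ∑ i, lam i) : r ≤ topSum lam (invDeg lam r) :=
  Nat.sInf_mem (s := {d | r ≤ topSum lam d}) ⟨n, show r ≤ topSum lam n by rwa [topSum_self]⟩

theorem invDeg_le {r : ℕ} (hr : r ≤ ∑ i, lam i) : invDeg lam r ≤ n :=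
  Nat.sInf_le (show r ≤ topSum lam n by rwa [topSum_self])

theorem topSum_lt_of_lt_invDeg_s9 {r t : ℕ} (ht : t < invDeg lam r) : topSum lam t < r :=
  lt_of_not_ge (Nat.notMem_of_lt_sInf (s := {d | r ≤ topSum lam d}) ht)

theorem one_le_invDeg {r : ℕ} (hr1 : 1 ≤ r) (hr : r ≤ ∑ i, lam i) : 1 ≤ invDeg lam r := by
  by_contra h0
  have := le_topSum_invDeg hr
  rw [show invDeg lam r = 0 by omega, topSum_zero] at this
  omega

variable (lam)

def topComp (d s : ℕ) (i : Fin n) : ℕ :=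
  if (i : ℕ) < n - d then 0 else if (i : ℕ) = n - d then s else lam i

variable {lam}

theorem topComp_ne_zero_iff (hpos : ∀ i, 0 < lam i) {d s : ℕ} (hs : s ≠ 0) (i : Fin n) :
    topComp lam d s i ≠ 0 ↔ n - d ≤ (i : ℕ) := by
  have := hpos i
  unfold topComp
  split_ifs <;> omega

theorem topComp_le {d s : ℕ} {m : Fin n} (hm : (m : ℕ) = n - d) (hs : s ≤ lam m) (i : Fin n) :
    topComp lam d s i ≤ lam i := by
  unfold topComp
  split_ifs with h1 h2
  · exact Nat.zero_le _
  · rwa [show i = m from Fin.ext (by omega)]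
  · exact le_rfl

theorem sum_topComp {d : ℕ} (s : ℕ) (hd1 : 1 ≤ d) (hdn : d ≤ n) :
    ∑ i, topComp lam d s i = s + topSum lam (d - 1) := by
  have hsplit : ∀ i : Fin n, topComp lam d s i =
      (if i = ⟨n - d, by omega⟩ then s else 0) + if n - (d - 1) ≤ (i : ℕ) then lam i else 0 := by
    intro i
    simp only [topComp, Fin.ext_iff]
    split_ifs <;> omega
  simp only [topSum, sum_filter, hsplit, sum_add_distrib, sum_ite_eq', mem_univ, if_true]

end Partition

section Slice

variable {F : Type*} [Field F] {n : ℕ} {lam : Fin n → ℕ}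

variable (lam) in
def sliceCoord (a : ℕ → ℕ → F) (i j : Fin n) (t : ℕ) : F :=
  if sft lam i j ≤ t ∧ t < lam j then
    (if (j : ℕ) = i + 1 ∧ t = lam j - 1 then 1 else 0) + (if (i : ℕ) = n - 1 then a j t else 0)
  else 0

theorem eval_xE {N : ℕ} {row : Fin N → Fin n} {col : Fin N → ℕ}
    (bE : Module.Basis (BoxIdx lam) F ↥(gCent F (eNil F row col))) (a : ℕ → ℕ → F)
    (i j : Fin n) (t : ℕ) :
    MvPolynomial.eval (fun b => slicePt F lam row col bE a (bE b)) (xE F lam i j t) =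
      sliceCoord lam a i j t := by
  unfold xE sliceCoord
  by_cases h : sft lam i j ≤ t ∧ t < lam j
  · rw [dif_pos h, if_pos h]
    exact (MvPolynomial.eval_X _).trans (Module.Basis.constr_basis _ _ _ _)
  · rw [dif_neg h, if_neg h, map_zero]

theorem sliceCoord_ne_zero {a : ℕ → ℕ → F} {i j : Fin n} {t : ℕ}
    (h : sliceCoord lam a i j t ≠ 0) : (i : ℕ) = n - 1 ∨ ((j : ℕ) = i + 1 ∧ t = lam j - 1) := by
  by_contra hc
  rw [not_or] at hc
  refine h ?_
  rw [sliceCoord, if_neg hc.2, if_neg hc.1, add_zero, ite_self]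

theorem sliceCoord_of_last (hmono : Monotone lam) (a : ℕ → ℕ → F) {i j : Fin n} {t : ℕ}
    (hi : (i : ℕ) = n - 1) (ht : t < lam j) : sliceCoord lam a i j t = a j t := by
  have hji : lam j ≤ lam i := hmono (Fin.le_def.mpr (by omega))
  have hj : (j : ℕ) ≠ i + 1 := by omega
  rw [sliceCoord, if_pos ⟨by rw [sft, min_eq_right hji, Nat.sub_self]; omega, ht⟩, if_neg (fun h => hj h.1), if_pos hi, zero_add]

theorem sliceCoord_of_succ (hmono : Monotone lam) (hpos : ∀ i, 0 < lam i) (a : ℕ → ℕ → F)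
    {i j : Fin n} (hj : (j : ℕ) = i + 1) : sliceCoord lam a i j (lam j - 1) = 1 := by
  have hij : lam i ≤ lam j := hmono (Fin.le_def.mpr (by omega))
  have := hpos i
  have := hpos j
  have hi : (i : ℕ) ≠ n - 1 := by omega
  rw [sliceCoord, if_pos ⟨by rw [sft, min_eq_left hij]; omega, by omega⟩, if_pos ⟨hj, rfl⟩,
    if_neg hi, add_zero]

variable (lam) in
def sliceMatrix (a : ℕ → ℕ → F) (S : Finset (Fin n)) (μ : Fin n → ℕ) :
    Matrix (Fin S.card) (Fin S.card) F := fun p q =>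
  sliceCoord lam a (S.orderEmbOfFin rfl p) (S.orderEmbOfFin rfl q) (μ (S.orderEmbOfFin rfl q) - 1)

theorem eval_xcdetMu {N : ℕ} {row : Fin N → Fin n} {col : Fin N → ℕ}
    (bE : Module.Basis (BoxIdx lam) F ↥(gCent F (eNil F row col))) (a : ℕ → ℕ → F)
    (μ : Fin n → Fin (N + 1)) :
    MvPolynomial.eval (fun b => slicePt F lam row col bE a (bE b)) (xcdetMu F lam N μ) =
      (sliceMatrix lam a (univ.filter fun i => (μ i : ℕ) ≠ 0) fun i => μ i).det := by
  simp only [xcdetMu, Matrix.det_apply, Units.smul_def, map_sum, map_zsmul, map_prod,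
    Finset.coe_orderIsoOfFin_apply, eval_xE, sliceMatrix]

theorem eq_topComp_of_det_sliceMatrix_ne_zero (hpos : ∀ i, 0 < lam i) {a : ℕ → ℕ → F}
    {μ : Fin n → ℕ} (hle : ∀ i, μ i ≤ lam i) {S : Finset (Fin n)} (hS : ∀ i, i ∈ S ↔ μ i ≠ 0)
    (hS0 : 0 < S.card) {s : ℕ} (hsum : ∑ i, μ i = s + topSum lam (S.card - 1))
    (hdet : (sliceMatrix lam a S μ).det ≠ 0) : μ = topComp lam S.card s := by
  obtain ⟨w, hw⟩ := Matrix.exists_perm_forall_ne_zero_of_det_ne_zero hdet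
  set ι := S.orderEmbOfFin rfl
  obtain ⟨hval, hfull⟩ := ι.val_eq_of_cyclic_shift w (fun q => μ (ι q) = lam (ι q)) fun q => by
    have : μ (ι q) ≠ 0 := (hS _).mp (S.orderEmbOfFin_mem rfl q)
    have := hle (ι q)
    have := hpos (ι q)
    rcases sliceCoord_ne_zero (i := ι (w q)) (j := ι q) (t := μ (ι q) - 1) (hw q) with h | h
    · exact Or.inl h
    · exact Or.inr ⟨h.1, by omega⟩
  have hoff : ∀ s' (i : Fin n), (i : ℕ) ≠ n - S.card → μ i = topComp lam S.card s' i := by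
    intro s' i hi
    unfold topComp
    split_ifs with hlt
    · by_contra h
      obtain ⟨q, rfl⟩ : i ∈ Set.range ι := by
        rw [Finset.range_orderEmbOfFin]; exact (hS i).mpr h
      have := hval q
      omega
    · have hi' := i.isLt
      have hq : ι ⟨i - (n - S.card), by omega⟩ = i := Fin.ext (by rw [hval]; simp only; omega)
      rw [← hq]
      exact hfull _ (by simp only; omega)
  have hSn : S.card ≤ n := S.card_le_univ.trans_eq (Fintype.card_fin n)
  have hm : n - S.card < n := by omega
  have hμ : μ = topComp lam S.card (μ ⟨n - S.card, hm⟩) := by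
    funext i
    by_cases hi : (i : ℕ) = n - S.card
    · simp [topComp, show i = ⟨n - S.card, hm⟩ from Fin.ext hi]
    · exact hoff _ i hi
  rw [hμ, sum_topComp _ hS0 hSn] at hsum
  rw [hμ, Nat.add_right_cancel hsum]

theorem det_sliceMatrix_topComp (hmono : Monotone lam) (hpos : ∀ i, 0 < lam i)
    (a : ℕ → ℕ → F) {d s : ℕ} (hd1 : 1 ≤ d) (hdn : d ≤ n) (hs1 : 1 ≤ s)
    (hs : s ≤ lam ⟨n - d, by omega⟩) {S : Finset (Fin n)} (hS : ∀ i, i ∈ S ↔ n - d ≤ (i : ℕ)) :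
    (sliceMatrix lam a S (topComp lam d s)).det = (-1) ^ (d - 1) * a (n - d) (s - 1) := by
  have hc : S.card = d := by rw [Fin.card_of_forall_mem_iff_le_val hS]; omega
  have hι : ∀ q, (S.orderEmbOfFin rfl q : ℕ) = n - d + q := val_orderEmbOfFin_of_mem_iff hS rfl
  have hμ0 : ∀ q : Fin S.card, (q : ℕ) = 0 → topComp lam d s (S.orderEmbOfFin rfl q) = s := by
    intro q hq
    simp [topComp, hι, hq]
  have hμ : ∀ q : Fin S.card, (q : ℕ) ≠ 0 →
      topComp lam d s (S.orderEmbOfFin rfl q) = lam (S.orderEmbOfFin rfl q) := by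
    intro q hq
    simp only [topComp, hι]
    rw [if_neg (by omega), if_neg (by omega)]
  rw [Matrix.det_eq_of_superdiagonal_ones (hc ▸ hd1)]
  · have hlast : (S.orderEmbOfFin rfl ⟨S.card - 1, by omega⟩ : ℕ) = n - 1 := by
      rw [hι]; simp only; omega
    congr 1
    · rw [hc]
    · have h0 : S.orderEmbOfFin rfl ⟨0, by omega⟩ = ⟨n - d, by omega⟩ := Fin.ext (hι _)
      rw [sliceMatrix, hμ0 _ rfl, sliceCoord_of_last hmono a hlast (by rw [h0]; omega), h0]
  · intro p hp
    by_contra h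
    rcases sliceCoord_ne_zero h with h | h <;> simp only [hι] at h <;> omega
  · intro p q hp hq
    split_ifs with hpq
    · rw [sliceMatrix, hμ q hq]
      exact sliceCoord_of_succ hmono hpos a (by rw [hι, hι]; omega)
    · by_contra h
      rcases sliceCoord_ne_zero h with h | h <;> simp only [hι] at h <;> omega

theorem eval_xEl_eq {N : ℕ} {row : Fin N → Fin n} {col : Fin N → ℕ} (hpos : ∀ i, 0 < lam i)
    (hmono : Monotone lam) (hsum : ∑ i, lam i = N)
    (bE : Module.Basis (BoxIdx lam) F ↥(gCent F (eNil F row col))) (a : ℕ → ℕ → F)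
    {r d s : ℕ} (hd : invDeg lam r = d) (hd1 : 1 ≤ d) (hdn : d ≤ n) (hs1 : 1 ≤ s)
    (hs : s ≤ lam ⟨n - d, by omega⟩) (hr : s + topSum lam (d - 1) = r) :
    MvPolynomial.eval (fun b => slicePt F lam row col bE a (bE b)) (xEl F lam N r) =
      (-1) ^ (d - 1) * a (n - d) (s - 1) := by
  have hle₀ := topComp_le (m := ⟨n - d, by omega⟩) rfl hs
  let μ₀ : Fin n → Fin (N + 1) := fun i => ⟨topComp lam d s i, Nat.lt_succ_of_le <| (hle₀ i).trans
    <| hsum ▸ Finset.single_le_sum (fun j _ => Nat.zero_le (lam j)) (mem_univ i)⟩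
  have hsupp : ∀ i, i ∈ univ.filter (fun i => (μ₀ i : ℕ) ≠ 0) ↔ n - d ≤ (i : ℕ) := fun i => by
    simp only [mem_filter, mem_univ, true_and]
    exact topComp_ne_zero_iff hpos (by omega) i
  rw [xEl, map_sum, Finset.sum_eq_single_of_mem μ₀, eval_xcdetMu,
    det_sliceMatrix_topComp hmono hpos a hd1 hdn hs1 hs hsupp]
  · simp only [mem_filter, mem_univ, true_and]
    refine ⟨hle₀, by rw [sum_topComp s hd1 hdn, hr], ?_⟩
    rw [Fin.card_of_forall_mem_iff_le_val hsupp, hd]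
    omega
  · intro μ hμ hne
    simp only [mem_filter, mem_univ, true_and, hd] at hμ
    obtain ⟨hle, hμr, hμd⟩ := hμ
    rw [eval_xcdetMu]
    by_contra hdet
    have := eq_topComp_of_det_sliceMatrix_ne_zero hpos hle (fun i => by simp) (by omega)
      (s := s) (by rw [hμd, hμr, hr]) hdet
    rw [hμd] at this
    exact hne (funext fun i => Fin.ext (congrFun this i))

end Slice

theorem statement9_general
    {F : Type*} [Field F] {n N : ℕ} (lam : Fin n → ℕ)
    (hpos : ∀ i, 0 < lam i) (hmono : Monotone lam) (hsum : ∑ i, lam i = N)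
    (row : Fin N → Fin n) (col : Fin N → ℕ)
    (bE : Module.Basis (BoxIdx lam) F ↥(gCent F (eNil F row col)))
    (r : ℕ) (hr1 : 1 ≤ r) (hrN : r ≤ N) (a : ℕ → ℕ → F) :
    MvPolynomial.eval (fun b : BoxIdx lam => slicePt F lam row col bE a (bE b))
        (xEl F lam N r) =
      (-1) ^ (invDeg lam r - 1) * a (n - invDeg lam r) (r - topSum lam (invDeg lam r - 1) - 1) := by
  rw [← hsum] at hrN
  have hd1 := one_le_invDeg hr1 hrN
  have hdn := invDeg_le hrN
  have hr_le := le_topSum_invDeg hrN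
  have hr_gt := topSum_lt_of_lt_invDeg_s9 (lam := lam) (r := r) (t := invDeg lam r - 1) (by omega)
  rw [topSum_eq_add_topSum_pred lam hd1 hdn] at hr_le
  exact eval_xEl_eq hpos hmono hsum bE a rfl hd1 hdn (by omega) (by omega) (by omega)

theorem statement9
    {F : Type*} [Field F] [IsAlgClosed F] [CharZero F] {n N : ℕ} (lam : Fin n → ℕ)
    (hpos : ∀ i, 0 < lam i) (hmono : Monotone lam) (hsum : ∑ i, lam i = N)
    (row : Fin N → Fin n) (col : Fin N → ℕ)
    (hcol : ∀ k, 1 ≤ col k ∧ col k ≤ lam (row k))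
    (horder : ∀ k l : Fin N, k < l ↔ (row k < row l ∨ (row k = row l ∧ col k < col l)))
    (hsurj : ∀ (i : Fin n) (c : ℕ), 1 ≤ c → c ≤ lam i → ∃ k, row k = i ∧ col k = c)
    (bE : Module.Basis (BoxIdx lam) F ↥(gCent F (eNil F row col)))
    (hbE : ∀ b : BoxIdx lam,
      (↑(bE b) : Matrix (Fin N) (Fin N) F) = eE F row col b.1.1 b.1.2.1 b.1.2.2)
    (r : ℕ) (hr1 : 1 ≤ r) (hrN : r ≤ N) (a : ℕ → ℕ → F) :
    MvPolynomial.eval (fun b : BoxIdx lam => slicePt F lam row col bE a (bE b))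
        (xEl F lam N r) =
      (-1) ^ (invDeg lam r - 1) * a (n - invDeg lam r) (r - topSum lam (invDeg lam r - 1) - 1) :=
  statement9_general lam hpos hmono hsum row col bE r hr1 hrN a
end
end

section
/- For all 1 ≤ i ≤ j < n and 0 ≤ r < λ_i, one has (ad* e_{i,j+1;λ_{j+1}−r−1})(f) = f_{j,i;r} − f_{j+1,i+1;λ_{i+1}−λ_{j+1}+r}, where f_{a,b;t} is interpreted as 0 whenever t lies outside the range s_{a,b} ≤ t < λ_b. -/
/-!
Put `R = λ_{j+1} - r - 1`. In `g_e` the basis multiplies like matrix units,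
`e_{a,b;R} e_{b,c;s} = e_{a,c;R+s}` (the intermediate box exists because `s ≥ s_{b,c}`), so
`[e_{a,b;R}, e_{k,l;s}] = δ_{b,k} e_{a,l;R+s} - δ_{l,a} e_{k,b;s+R}`, where `e_{a,c;t} = 0` once
`t ≥ λ_c`. As `f` is `1` exactly on the `e_{a,a+1;λ_{a+1}-1}`, the value `-f([e_{i,j+1;R}, e_{k,l;s}])`
is `1` for `(k,l,s) = (j,i,r)` and `-1` for `(k,l,s) = (j+1,i+1,λ_{i+1}-λ_{j+1}+r)` when that
index is in range.
-/


noncomputable section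

open scoped BigOperators

attribute [local instance 100] LieRing.ofAssociativeRing

section Matrix

variable {F : Type*} [Field F] {n N : ℕ} {row : Fin N → Fin n} {col : Fin N → ℕ}

lemma eE_apply (a b : Fin n) (r : ℕ) (h k : Fin N) :
    eE F row col a b r h k = if row h = a ∧ row k = b ∧ col k = col h + r then 1 else 0 := by
  simp only [eE, Matrix.sum_apply, apply_ite (fun M : Matrix (Fin N) (Fin N) F => M h k),
    Matrix.single_apply, Matrix.zero_apply, ← ite_and]
  rw [Fintype.sum_eq_single h, Fintype.sum_eq_single k]
  · simp only [and_true]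
  · intro y hy; simp [hy]
  · intro x hx; simp [hx]

lemma injective_row_col_of_lt_iff
    (horder : ∀ k l : Fin N, k < l ↔ (row k < row l ∨ (row k = row l ∧ col k < col l))) :
    Function.Injective fun k => (row k, col k) := by
  intro k l hkl
  simp only [Prod.mk.injEq] at hkl
  by_contra hne
  rcases lt_or_gt_of_ne hne with h | h
  · rcases (horder _ _).1 h with h | h <;> omega
  · rcases (horder _ _).1 h with h | h <;> omega

variable (lam : Fin n → ℕ) (hcol : ∀ k, 1 ≤ col k ∧ col k ≤ lam (row k))
include hcol

lemma eE_eq_zero_of_le (a c : Fin n) {t : ℕ} (ht : lam c ≤ t) : eE F row col a c t = 0 := by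
  ext h k
  rw [eE_apply, if_neg, Matrix.zero_apply]
  rintro ⟨-, rfl, hk⟩
  have := hcol h
  have := hcol k
  omega

lemma eE_mul_eE (hinj : Function.Injective fun k => (row k, col k))
    (hsurj : ∀ (i : Fin n) (c : ℕ), 1 ≤ c → c ≤ lam i → ∃ k, row k = i ∧ col k = c)
    {a b b' c : Fin n} (r : ℕ) {s : ℕ} (hs : sft lam b' c ≤ s) :
    eE F row col a b r * eE F row col b' c s = if b = b' then eE F row col a c (r + s) else 0 := by
  ext h k
  simp only [Matrix.mul_apply, eE_apply, ite_zero_mul_ite_zero, one_mul]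
  split_ifs with hb
  · subst hb
    rw [eE_apply]
    split_ifs with H
    · obtain ⟨hh, hk, hc⟩ := H
      obtain ⟨m, hm, hmc⟩ := hsurj b (col h + r) (by have := hcol h; omega) (by
        have := hcol k
        rw [hk] at this
        unfold sft at hs
        omega)
      rw [Fintype.sum_eq_single m fun m' hm' => if_neg fun H' =>
        hm' (hinj (Prod.ext (H'.1.2.1.trans hm.symm) (H'.1.2.2.trans hmc.symm)))]
      exact if_pos ⟨⟨hh, hm, hmc⟩, hm, hk, by omega⟩
    · exact Finset.sum_eq_zero fun m _ => if_neg fun H' => H ⟨H'.1.1, H'.2.2.1, by omega⟩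
  · exact Finset.sum_eq_zero fun m _ => if_neg fun H' => hb (H'.1.2.1.symm.trans H'.2.1)

end Matrix

lemma sft_le_add {n : ℕ} (lam : Fin n → ℕ) (a b c : Fin n) :
    sft lam a c ≤ sft lam a b + sft lam b c := by
  unfold sft
  omega

section Centralizer

variable {F : Type*} [Field F] {n N : ℕ} {lam : Fin n → ℕ} {row : Fin N → Fin n}
  {col : Fin N → ℕ} (bE : Module.Basis (BoxIdx lam) F ↥(gCent F (eNil F row col)))

lemma eHat_eq_basis {a c : Fin n} {t : ℕ} (h : sft lam a c ≤ t ∧ t < lam c) :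
    eHat F lam row col bE a c t = bE ⟨(a, c, t), h⟩ :=
  dif_pos h

lemma coe_eHat (hcol : ∀ k, 1 ≤ col k ∧ col k ≤ lam (row k))
    (hbE : ∀ b : BoxIdx lam,
      (↑(bE b) : Matrix (Fin N) (Fin N) F) = eE F row col b.1.1 b.1.2.1 b.1.2.2)
    {a c : Fin n} {t : ℕ} (ht : sft lam a c ≤ t) :
    (eHat F lam row col bE a c t : Matrix (Fin N) (Fin N) F) = eE F row col a c t := by
  unfold eHat
  split_ifs with h
  · exact hbE ⟨(a, c, t), h⟩
  · rw [eE_eq_zero_of_le lam hcol a c (by omega), ZeroMemClass.coe_zero]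

lemma lie_basis (hcol : ∀ k, 1 ≤ col k ∧ col k ≤ lam (row k))
    (hinj : Function.Injective fun k => (row k, col k))
    (hsurj : ∀ (i : Fin n) (c : ℕ), 1 ≤ c → c ≤ lam i → ∃ k, row k = i ∧ col k = c)
    (hbE : ∀ b : BoxIdx lam,
      (↑(bE b) : Matrix (Fin N) (Fin N) F) = eE F row col b.1.1 b.1.2.1 b.1.2.2)
    {a b k l : Fin n} {R s : ℕ} (hx : sft lam a b ≤ R ∧ R < lam b)
    (hy : sft lam k l ≤ s ∧ s < lam l) :
    ⁅bE ⟨(a, b, R), hx⟩, bE ⟨(k, l, s), hy⟩⁆ =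
      (if b = k then eHat F lam row col bE a l (R + s) else 0) -
        (if l = a then eHat F lam row col bE k b (s + R) else 0) := by
  apply Subtype.ext
  rw [LieSubalgebra.coe_bracket, Ring.lie_def, hbE ⟨(a, b, R), hx⟩, hbE ⟨(k, l, s), hy⟩]
  dsimp only
  rw [eE_mul_eE lam hcol hinj hsurj _ hy.1, eE_mul_eE lam hcol hinj hsurj _ hx.1,
    AddSubgroupClass.coe_sub]
  split_ifs with hbk hla hla
  · subst hbk hla
    rw [coe_eHat bE hcol hbE (by have := sft_le_add lam l b l; omega),
      coe_eHat bE hcol hbE (by have := sft_le_add lam b l b; omega)]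
  · subst hbk
    rw [coe_eHat bE hcol hbE (by have := sft_le_add lam a b l; omega), ZeroMemClass.coe_zero]
  · subst hla
    rw [coe_eHat bE hcol hbE (by have := sft_le_add lam k l b; omega), ZeroMemClass.coe_zero]
  · rw [ZeroMemClass.coe_zero]

lemma fReg_eHat (a c : Fin n) (t : ℕ) :
    fReg F lam row col bE (eHat F lam row col bE a c t) =
      if (c : ℕ) = a + 1 ∧ t + 1 = lam c ∧ sft lam a c ≤ t then 1 else 0 := by
  unfold eHat
  split_ifs with h h'
  · refine (bE.constr_basis F _ _).trans ?_
    dsimp only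
    exact if_pos ⟨h'.1, by omega⟩
  · refine (bE.constr_basis F _ _).trans ?_
    dsimp only
    exact if_neg fun h'' => h' ⟨h''.1, by omega, h.1⟩
  · omega
  · rw [map_zero]

lemma fHat_basis (a c k l : Fin n) (t : ℤ) (s : ℕ) (hy : sft lam k l ≤ s ∧ s < lam l) :
    fHat F lam row col bE a c t (bE ⟨(k, l, s), hy⟩) = if a = k ∧ c = l ∧ t = s then 1 else 0 := by
  classical
  unfold fHat
  split_ifs with h h' h'
  · obtain ⟨rfl, rfl, rfl⟩ := h'
    exact (bE.repr_self_apply _ _).trans (if_pos rfl)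
  · refine (bE.repr_self_apply _ _).trans (if_neg fun he => ?_)
    have he' := congrArg Subtype.val he
    simp only [Prod.mk.injEq] at he'
    exact h' ⟨he'.1.symm, he'.2.1.symm, by omega⟩
  · obtain ⟨rfl, rfl, rfl⟩ := h'
    exact absurd ⟨by exact_mod_cast hy.1, by exact_mod_cast hy.2⟩ h
  · rfl

lemma coad_fReg_basis (hcol : ∀ k, 1 ≤ col k ∧ col k ≤ lam (row k))
    (hinj : Function.Injective fun k => (row k, col k))
    (hsurj : ∀ (i : Fin n) (c : ℕ), 1 ≤ c → c ≤ lam i → ∃ k, row k = i ∧ col k = c)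
    (hbE : ∀ b : BoxIdx lam,
      (↑(bE b) : Matrix (Fin N) (Fin N) F) = eE F row col b.1.1 b.1.2.1 b.1.2.2)
    {a b k l : Fin n} {R s : ℕ} (hx : sft lam a b ≤ R ∧ R < lam b)
    (hy : sft lam k l ≤ s ∧ s < lam l) :
    coad F row col (bE ⟨(a, b, R), hx⟩) (fReg F lam row col bE) (bE ⟨(k, l, s), hy⟩) =
      (if l = a ∧ (b : ℕ) = k + 1 ∧ s + R + 1 = lam b ∧ sft lam k b ≤ s + R then 1 else 0) -
        (if b = k ∧ (l : ℕ) = a + 1 ∧ R + s + 1 = lam l ∧ sft lam a l ≤ R + s then 1 else 0) := by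
  rw [coad, LinearMap.neg_apply, LinearMap.comp_apply, LieAlgebra.ad_apply,
    lie_basis bE hcol hinj hsurj hbE, map_sub, apply_ite (fReg F lam row col bE),
    apply_ite (fReg F lam row col bE), map_zero, fReg_eHat, fReg_eHat, neg_sub]
  simp only [ite_and]

end Centralizer

theorem statement15
    {F : Type*} [Field F] {n N : ℕ} (lam : Fin n → ℕ)
    (hmono : Monotone lam)
    (row : Fin N → Fin n) (col : Fin N → ℕ)
    (hcol : ∀ k, 1 ≤ col k ∧ col k ≤ lam (row k))
    (horder : ∀ k l : Fin N, k < l ↔ (row k < row l ∨ (row k = row l ∧ col k < col l)))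
    (hsurj : ∀ (i : Fin n) (c : ℕ), 1 ≤ c → c ≤ lam i → ∃ k, row k = i ∧ col k = c)
    (bE : Module.Basis (BoxIdx lam) F ↥(gCent F (eNil F row col)))
    (hbE : ∀ b : BoxIdx lam,
      (↑(bE b) : Matrix (Fin N) (Fin N) F) = eE F row col b.1.1 b.1.2.1 b.1.2.2)
    (i j : Fin n) (hij : (i : ℕ) ≤ (j : ℕ)) (hj : (j : ℕ) + 1 < n) (r : ℕ) (hr : r < lam i) :
    coad F row col
        (eHat F lam row col bE i ⟨(j : ℕ) + 1, hj⟩ (lam ⟨(j : ℕ) + 1, hj⟩ - r - 1))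
        (fReg F lam row col bE) =
      fHat F lam row col bE j i (r : ℤ) -
        fHat F lam row col bE ⟨(j : ℕ) + 1, hj⟩ ⟨(i : ℕ) + 1, by omega⟩
          ((lam ⟨(i : ℕ) + 1, by omega⟩ : ℤ) - (lam ⟨(j : ℕ) + 1, hj⟩ : ℤ) + (r : ℤ)) := by
  set I : Fin n := ⟨i + 1, by omega⟩
  set J : Fin n := ⟨j + 1, hj⟩
  have hij' : lam i ≤ lam j := hmono hij
  have hiI : lam i ≤ lam I := hmono (Fin.le_def.2 (show (i : ℕ) ≤ i + 1 by omega))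
  have hIJ : lam I ≤ lam J := hmono (Fin.le_def.2 (show (i : ℕ) + 1 ≤ j + 1 by omega))
  have hjJ : lam j ≤ lam J := hmono (Fin.le_def.2 (show (j : ℕ) ≤ j + 1 by omega))
  have hx : sft lam i J ≤ lam J - r - 1 ∧ lam J - r - 1 < lam J := by unfold sft; omega
  rw [eHat_eq_basis bE hx]
  refine bE.ext fun ⟨⟨k, l, s⟩, hy⟩ => ?_
  rw [coad_fReg_basis bE hcol (injective_row_col_of_lt_iff horder) hsurj hbE,
    LinearMap.sub_apply, fHat_basis, fHat_basis]
  congr 1 <;> refine if_congr ⟨?_, ?_⟩ rfl rfl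
  · rintro ⟨rfl, hk, hs, -⟩
    exact ⟨Fin.ext (by simp [J] at hk; omega), rfl, by omega⟩
  · rintro ⟨rfl, rfl, hs⟩
    exact ⟨rfl, rfl, by omega, by unfold sft; omega⟩
  · rintro ⟨rfl, hl, hs, -⟩
    obtain rfl : l = I := Fin.ext hl
    exact ⟨rfl, rfl, by omega⟩
  · rintro ⟨rfl, rfl, hs⟩
    exact ⟨rfl, rfl, by omega, by unfold sft; omega⟩
end
end
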